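/- The only p-archimedean divisibility | on the field ℚ with p∤1 is the one induced by the p-adic valuation: a|b ⟺ v_p(a) ≤ v_p(b). -/

import Mathlib

/-!
The elements `x` with `1 ∣ x` form a subring `S` of `ℚ`, and for `a ≠ 0` one has `a ∣ b` iff
`b / a ∈ S`. The `p`-archimedean property says that every rational lands in `S` after
multiplication by a power of `p`, and `p ∤ 1` says `1 / p ∉ S`. Bézout turns `m / n ∈ S` with `m`,
`n` coprime into `1 / n ∈ S`. Applied to a reduced fraction this shows that `p` divides no
denominator of an element of `S` (else `1 / p ∈ S`); applied to `p ^ k / b` it gives `1 / b ∈ S`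
whenever `p ∤ b`. Hence `S = ℤ_(p) = {x | 0 ≤ v_p x}`.
-/

def IsDivisibility {A : Type*} [CommRing A] (D : A → A → Prop) : Prop :=
  (∀ a, D a a) ∧ (∀ a b c : A, D a b → D b c → D a c) ∧
  (∀ a b c : A, D a b → D a c → D a (b - c)) ∧
  (∀ a b c : A, D a b → D (a * c) (b * c)) ∧ ¬ D 0 1

namespace IsDivisibility

section CommRing

variable {A : Type*} [CommRing A] {D : A → A → Prop} (hD : IsDivisibility D)
include hD

protected theorem refl (a : A) : D a a := hD.1 a

protected theorem trans {a b c : A} : D a b → D b c → D a c := hD.2.1 a b c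

theorem dvd_sub {a b c : A} : D a b → D a c → D a (b - c) := hD.2.2.1 a b c

theorem mul_dvd_mul_right {a b : A} (c : A) : D a b → D (a * c) (b * c) := hD.2.2.2.1 a b c

theorem not_zero_dvd_one : ¬ D 0 1 := hD.2.2.2.2

theorem dvd_zero (a : A) : D a 0 := by
  simpa using hD.dvd_sub (hD.refl a) (hD.refl a)

theorem mul_dvd_mul_left {a b : A} (c : A) (h : D a b) : D (c * a) (c * b) := by
  simpa [mul_comm] using hD.mul_dvd_mul_right c h

def integers : Subring A where
  carrier := {x | D 1 x}
  one_mem' := hD.refl 1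
  zero_mem' := hD.dvd_zero 1
  neg_mem' {x} hx := by simpa using hD.dvd_sub (hD.dvd_zero 1) hx
  add_mem' {x y} hx hy := by
    simpa using hD.dvd_sub hx (hD.dvd_sub (hD.dvd_zero 1) hy)
  mul_mem' {x y} hx hy := hD.trans hx (by simpa using hD.mul_dvd_mul_left x hy)

theorem mem_integers {x : A} : x ∈ hD.integers ↔ D 1 x := Iff.rfl

end CommRing

section Field

variable {K : Type*} [Field K] {D : K → K → Prop} (hD : IsDivisibility D)
include hD

theorem zero_dvd_iff {b : K} : D 0 b ↔ b = 0 := by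
  refine ⟨fun h => by_contra fun hb => hD.not_zero_dvd_one ?_, fun hb => hb ▸ hD.dvd_zero 0⟩
  simpa [hb] using hD.mul_dvd_mul_right b⁻¹ h

theorem dvd_iff_div_mem_integers {a b : K} (ha : a ≠ 0) : D a b ↔ b / a ∈ hD.integers := by
  rw [mem_integers]
  refine ⟨fun h => ?_, fun h => ?_⟩
  · simpa [ha, div_eq_mul_inv] using hD.mul_dvd_mul_right a⁻¹ h
  · simpa [ha] using hD.mul_dvd_mul_right a h

end Field

end IsDivisibility

theorem padicValRat_nonneg_iff_not_dvd_den {p : ℕ} [Fact p.Prime] {x : ℚ} :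
    0 ≤ padicValRat p x ↔ ¬ p ∣ x.den := by
  rcases eq_or_ne x 0 with rfl | hx
  · simp [(Fact.out : p.Prime).ne_one]
  rw [← Rat.padicValuation_le_one_iff]
  simp only [Rat.padicValuation, hx, Valuation.coe_mk, MonoidWithZeroHom.coe_mk, ZeroHom.coe_mk,
    if_false, WithZero.exp_neg]
  rw [inv_le_one₀ (by simp), ← WithZero.exp_zero, WithZero.exp_le_exp]

namespace Subring

variable {S : Subring ℚ}

theorem inv_intCast_mem_of_div_mem {m n : ℤ} (hmn : IsCoprime m n) (h : (m / n : ℚ) ∈ S) :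
    (n : ℚ)⁻¹ ∈ S := by
  obtain ⟨u, v, huv⟩ := hmn
  have huv : (u : ℚ) * m + v * n = 1 := by exact_mod_cast huv
  rcases eq_or_ne (n : ℚ) 0 with hn | hn
  · simp [hn, zero_mem]
  have : (n : ℚ)⁻¹ = u * (m / n) + v := by
    field_simp
    linear_combination -huv
  rw [this]
  exact add_mem (mul_mem (intCast_mem S u) h) (intCast_mem S v)

theorem inv_den_mem {x : ℚ} (hx : x ∈ S) : (x.den : ℚ)⁻¹ ∈ S := by
  exact_mod_cast S.inv_intCast_mem_of_div_mem x.isCoprime_num_den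
    (by rwa [Int.cast_natCast, Rat.num_div_den])

theorem not_dvd_den_of_inv_notMem {p : ℕ} (hp : (p : ℚ)⁻¹ ∉ S) {x : ℚ} (hx : x ∈ S) :
    ¬ p ∣ x.den := by
  rintro ⟨d, hd⟩
  have hpd : (p : ℚ) * d ≠ 0 := by exact_mod_cast hd ▸ x.den_ne_zero
  have : (p : ℚ)⁻¹ = d * (x.den : ℚ)⁻¹ := by
    rw [hd, Nat.cast_mul]
    field_simp [right_ne_zero_of_mul hpd]
  exact hp (this ▸ mul_mem (natCast_mem S d) (S.inv_den_mem hx))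

theorem exists_pow_mul_mem {p : ℕ} (hp : p ≠ 0) {x : ℚ} {m : ℤ} (h : x / (p : ℚ) ^ m ∈ S) :
    ∃ k : ℕ, (p : ℚ) ^ k * x ∈ S := by
  have hp : (p : ℚ) ≠ 0 := by exact_mod_cast hp
  refine ⟨(-m).toNat, ?_⟩
  have : (p : ℚ) ^ (-m).toNat * x = x / (p : ℚ) ^ m * (p : ℚ) ^ m.toNat := by
    have e : ((m.toNat : ℕ) : ℤ) = m + (-m).toNat := by omega
    rw [← zpow_natCast, ← zpow_natCast (p : ℚ) m.toNat, e, zpow_add₀ hp]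
    field_simp
  exact this ▸ mul_mem h (pow_mem (natCast_mem S p) _)

theorem inv_natCast_mem_of_coprime {p b : ℕ} (hS : ∀ x : ℚ, ∃ k : ℕ, (p : ℚ) ^ k * x ∈ S)
    (hb : p.Coprime b) : (b : ℚ)⁻¹ ∈ S := by
  obtain ⟨k, hk⟩ := hS (b : ℚ)⁻¹
  have := S.inv_intCast_mem_of_div_mem (Nat.isCoprime_iff_coprime.mpr (hb.pow_left k))
  push_cast at this
  exact this (by rwa [div_eq_mul_inv])

theorem mem_iff_padicValRat_nonneg {p : ℕ} [Fact p.Prime]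
    (hS : ∀ x : ℚ, ∃ k : ℕ, (p : ℚ) ^ k * x ∈ S) (hp : (p : ℚ)⁻¹ ∉ S) {x : ℚ} :
    x ∈ S ↔ 0 ≤ padicValRat p x := by
  rw [padicValRat_nonneg_iff_not_dvd_den]
  refine ⟨not_dvd_den_of_inv_notMem hp, fun hx => ?_⟩
  have hden := inv_natCast_mem_of_coprime hS ((Nat.Prime.coprime_iff_not_dvd Fact.out).mpr hx)
  rw [← x.num_div_den, div_eq_mul_inv]
  exact mul_mem (intCast_mem S _) hden

end Subring

theorem stmt_14 (p : ℕ) (hp : p.Prime) (D : ℚ → ℚ → Prop)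
    (hD : IsDivisibility D)
    (harch : ∀ a : ℚ, ∃ m : ℤ, D ((p : ℚ) ^ m) a)
    (hp1 : ¬ D (p : ℚ) 1) :
    ∀ a b : ℚ, D a b ↔ (b = 0 ∨ (a ≠ 0 ∧ padicValRat p a ≤ padicValRat p b)) := by
  have := Fact.mk hp
  have hp0 : (p : ℚ) ≠ 0 := by exact_mod_cast hp.ne_zero
  have hS (x : ℚ) : ∃ k : ℕ, (p : ℚ) ^ k * x ∈ hD.integers := by
    obtain ⟨m, hm⟩ := harch x
    rw [hD.dvd_iff_div_mem_integers (zpow_ne_zero m hp0)] at hm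
    exact Subring.exists_pow_mul_mem hp.ne_zero hm
  have hpS : (p : ℚ)⁻¹ ∉ hD.integers := by
    rwa [← one_div, ← hD.dvd_iff_div_mem_integers hp0]
  intro a b
  rcases eq_or_ne a 0 with rfl | ha
  · simp [hD.zero_dvd_iff]
  rcases eq_or_ne b 0 with rfl | hb
  · simp [hD.dvd_zero]
  rw [hD.dvd_iff_div_mem_integers ha, Subring.mem_iff_padicValRat_nonneg hS hpS,
    padicValRat.div hb ha, sub_nonneg]
  simp [ha, hb]
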